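/- arXiv:1401.5847 — 2 statements merged into one kernel-verified Lean document; each statement's English description precedes it below -/
import Mathlib

section
/- Let T ∈ (0,∞) be finite and let A, B : [0,T) → ℝ be differentiable with A(t) > 0 and B(t) > 0, satisfying A'(t) = -4(A(t)/B(t))² and B'(t) = -8 + 4·A(t)/B(t) on [0,T), and suppose A(t)/B(t) → 1 as t → T⁻. If 1/2 ≤ A(0)/B(0) < 1 or A(0)/B(0) > 1, then the function φ(t) := (A(t)/B(t))·|1 - A(t)/B(t)| is strictly decreasing on [0,T) and φ(t) → 0 as t → T⁻. -/
/-!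
The ratio `x = A/B` satisfies the logistic-type equation `x' = (8/B) x (1 - x)`. Hence `1 - x`
solves a linear equation `u' = c u`; by backward uniqueness it cannot vanish, so it keeps the sign
of `1 - x(0)`. Then `x` is strictly monotone and stays in `[1/2, 1)` (increasing) or in `(1, ∞)`
(decreasing), and on each of these ranges `s ↦ s |1 - s|` is monotone in the opposite sense.
The limit follows from continuity of `s ↦ s |1 - s|` at `1`.
-/

open Filter Set

theorem eqOn_zero_of_hasDerivAt_eq_mul_self {f c : ℝ → ℝ} {a b : ℝ}
    (hc : ContinuousOn c (Icc a b)) (hf : ∀ t ∈ Icc a b, HasDerivAt f (c t * f t) t)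
    (hb : f b = 0) : EqOn f 0 (Icc a b) := by
  obtain ⟨C, hC⟩ := isCompact_Icc.exists_bound_of_continuousOn hc
  have hlip : ∀ t ∈ Ioc a b, LipschitzOnWith (Real.toNNReal C) (fun y => c t * y) univ :=
    fun t ht => LipschitzWith.lipschitzOnWith <| LipschitzWith.of_dist_le' fun y z => by
      rw [dist_eq_norm, dist_eq_norm, ← mul_sub, norm_mul]
      exact mul_le_mul_of_nonneg_right (hC t (Ioc_subset_Icc_self ht)) (norm_nonneg _)
  refine ODE_solution_unique_of_mem_Icc_left hlip
    (fun t ht => (hf t ht).continuousAt.continuousWithinAt)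
    (fun t ht => (hf t (Ioc_subset_Icc_self ht)).hasDerivWithinAt) (fun _ _ => mem_univ _)
    continuousOn_const (fun t _ => ?_) (fun _ _ => mem_univ _) hb
  simp only [Pi.zero_apply, mul_zero]
  exact hasDerivWithinAt_const t (Iic t) 0

theorem pos_of_hasDerivAt_eq_mul_self {f c : ℝ → ℝ} {a b : ℝ}
    (hc : ContinuousOn c (Ico a b)) (hf : ∀ t ∈ Ico a b, HasDerivAt f (c t * f t) t)
    (ha : 0 < f a) : ∀ t ∈ Ico a b, 0 < f t := by
  intro t ht
  by_contra! hft
  have hsub : ∀ s ∈ Icc a t, Icc a s ⊆ Ico a b :=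
    fun s hs => Icc_subset_Ico_right (hs.2.trans_lt ht.2)
  have hfcont : ContinuousOn f (Icc a t) :=
    fun s hs => (hf s (hsub t ⟨ht.1, le_rfl⟩ hs)).continuousAt.continuousWithinAt
  obtain ⟨s, hs, hfs⟩ := intermediate_value_Icc' ht.1 hfcont ⟨hft, ha.le⟩
  exact ha.ne' <| eqOn_zero_of_hasDerivAt_eq_mul_self (hc.mono (hsub s hs))
    (fun u hu => hf u (hsub s hs hu)) hfs ⟨le_rfl, hs.1⟩

section Logistic

variable {x k : ℝ → ℝ} {a b : ℝ}

theorem lt_one_of_hasDerivAt_logistic (hk : ContinuousOn k (Ico a b))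
    (hx : ∀ t ∈ Ico a b, HasDerivAt x (k t * x t * (1 - x t)) t) (ha : x a < 1) :
    ∀ t ∈ Ico a b, x t < 1 := by
  have hxcont : ContinuousOn x (Ico a b) := fun t ht => (hx t ht).continuousAt.continuousWithinAt
  have hpos := pos_of_hasDerivAt_eq_mul_self (f := fun t => 1 - x t)
    (c := fun t => -(k t * x t)) (hk.mul hxcont).neg
    (fun t ht => ((hx t ht).const_sub 1).congr_deriv (by ring)) (sub_pos.2 ha)
  exact fun t ht => sub_pos.1 (hpos t ht)

theorem one_lt_of_hasDerivAt_logistic (hk : ContinuousOn k (Ico a b))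
    (hx : ∀ t ∈ Ico a b, HasDerivAt x (k t * x t * (1 - x t)) t) (ha : 1 < x a) :
    ∀ t ∈ Ico a b, 1 < x t := by
  have hxcont : ContinuousOn x (Ico a b) := fun t ht => (hx t ht).continuousAt.continuousWithinAt
  have hpos := pos_of_hasDerivAt_eq_mul_self (f := fun t => x t - 1)
    (c := fun t => -(k t * x t)) (hk.mul hxcont).neg
    (fun t ht => ((hx t ht).sub_const 1).congr_deriv (by ring)) (sub_pos.2 ha)
  exact fun t ht => sub_pos.1 (hpos t ht)

theorem strictMonoOn_of_hasDerivAt_logistic (hk : ∀ t ∈ Ico a b, 0 < k t)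
    (hx : ∀ t ∈ Ico a b, HasDerivAt x (k t * x t * (1 - x t)) t)
    (hx₀ : ∀ t ∈ Ico a b, 0 < x t) (hx₁ : ∀ t ∈ Ico a b, x t < 1) :
    StrictMonoOn x (Ico a b) := by
  refine strictMonoOn_of_hasDerivWithinAt_pos (convex_Ico a b)
    (fun t ht => (hx t ht).continuousAt.continuousWithinAt)
    (fun t ht => (hx t (interior_subset ht)).hasDerivWithinAt) fun t ht => ?_
  have ht' := interior_subset ht
  exact mul_pos (mul_pos (hk t ht') (hx₀ t ht')) (sub_pos.2 (hx₁ t ht'))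

theorem strictAntiOn_of_hasDerivAt_logistic (hk : ∀ t ∈ Ico a b, 0 < k t)
    (hx : ∀ t ∈ Ico a b, HasDerivAt x (k t * x t * (1 - x t)) t)
    (hx₁ : ∀ t ∈ Ico a b, 1 < x t) :
    StrictAntiOn x (Ico a b) := by
  refine strictAntiOn_of_hasDerivWithinAt_neg (convex_Ico a b)
    (fun t ht => (hx t ht).continuousAt.continuousWithinAt)
    (fun t ht => (hx t (interior_subset ht)).hasDerivWithinAt) fun t ht => ?_
  have ht' := interior_subset ht
  exact mul_neg_of_pos_of_neg (mul_pos (hk t ht') (zero_lt_one.trans (hx₁ t ht')))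
    (sub_neg.2 (hx₁ t ht'))

end Logistic

theorem strictAntiOn_mul_abs_one_sub :
    StrictAntiOn (fun s : ℝ => s * |1 - s|) (Icc (1 / 2) 1) := by
  intro s hs t ht hst
  simp only [abs_of_nonneg (sub_nonneg.2 hs.2), abs_of_nonneg (sub_nonneg.2 ht.2)]
  nlinarith [hs.1]

theorem strictMonoOn_mul_abs_one_sub : StrictMonoOn (fun s : ℝ => s * |1 - s|) (Ici 1) := by
  intro s hs t ht hst
  rw [mem_Ici] at hs ht
  simp only [abs_of_nonpos (sub_nonpos.2 hs), abs_of_nonpos (sub_nonpos.2 ht)]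
  nlinarith

theorem hasDerivAt_div_of_ricciFlow {A B : ℝ → ℝ} {t : ℝ}
    (hA : HasDerivAt A (-4 * (A t / B t) ^ 2) t) (hB : HasDerivAt B (-8 + 4 * (A t / B t)) t)
    (hBt : B t ≠ 0) :
    HasDerivAt (fun s => A s / B s) (8 / B t * (A t / B t) * (1 - A t / B t)) t :=
  (hA.div hB hBt).congr_deriv (by field_simp; ring)

theorem su2_L1_norm_monotone_general (T : ℝ) (A B : ℝ → ℝ)
    (hA : ∀ t ∈ Set.Ico (0 : ℝ) T, 0 < A t)
    (hB : ∀ t ∈ Set.Ico (0 : ℝ) T, 0 < B t)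
    (hA' : ∀ t ∈ Set.Ico (0 : ℝ) T, HasDerivAt A (-4 * (A t / B t) ^ 2) t)
    (hB' : ∀ t ∈ Set.Ico (0 : ℝ) T, HasDerivAt B (-8 + 4 * (A t / B t)) t)
    (hlim : Tendsto (fun t => A t / B t) (nhdsWithin T (Set.Iio T)) (nhds 1))
    (h0 : (1 / 2 ≤ A 0 / B 0 ∧ A 0 / B 0 < 1) ∨ 1 < A 0 / B 0) :
    StrictAntiOn (fun t => (A t / B t) * |1 - A t / B t|) (Set.Ico 0 T) ∧
    Tendsto (fun t => (A t / B t) * |1 - A t / B t|)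
      (nhdsWithin T (Set.Iio T)) (nhds 0) := by
  have hx := fun t ht => hasDerivAt_div_of_ricciFlow (hA' t ht) (hB' t ht) (hB t ht).ne'
  have hk : ContinuousOn (fun t => 8 / B t) (Ico 0 T) :=
    continuousOn_const.div (fun t ht => (hB' t ht).continuousAt.continuousWithinAt)
      fun t ht => (hB t ht).ne'
  have hkpos : ∀ t ∈ Ico (0 : ℝ) T, 0 < 8 / B t := fun t ht => div_pos (by norm_num) (hB t ht)
  refine ⟨?_, ?_⟩
  · rcases h0 with ⟨h_half, h_lt⟩ | h_gt
    · have hx₁ := lt_one_of_hasDerivAt_logistic hk hx h_lt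
      have hmono := strictMonoOn_of_hasDerivAt_logistic hkpos hx
        (fun t ht => div_pos (hA t ht) (hB t ht)) hx₁
      refine strictAntiOn_mul_abs_one_sub.comp_strictMonoOn hmono
        fun t ht => ⟨?_, (hx₁ t ht).le⟩
      have h0mem : (0 : ℝ) ∈ Ico 0 T := ⟨le_rfl, ht.1.trans_lt ht.2⟩
      exact h_half.trans (hmono.monotoneOn h0mem ht ht.1)
    · have hx₁ := one_lt_of_hasDerivAt_logistic hk hx h_gt
      exact strictMonoOn_mul_abs_one_sub.comp_strictAntiOn
        (strictAntiOn_of_hasDerivAt_logistic hkpos hx hx₁) fun t ht => (hx₁ t ht).le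
  · have hφ : Continuous fun s : ℝ => s * |1 - s| := by fun_prop
    simpa [Function.comp_def] using (hφ.tendsto 1).comp hlim

/-- Ricci flow ODE on SU(2) with `B = C`, case `1/2 ≤ A₀/B₀ < 1` or `A₀/B₀ > 1`:
the function `φ = (A/B)·|1 - A/B|` is strictly decreasing on `[0,T)` and `φ → 0`
as `t → T⁻`. -/
theorem su2_L1_norm_monotone (T : ℝ) (hT : 0 < T) (A B : ℝ → ℝ)
    (hA : ∀ t ∈ Set.Ico (0 : ℝ) T, 0 < A t)
    (hB : ∀ t ∈ Set.Ico (0 : ℝ) T, 0 < B t)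
    (hA' : ∀ t ∈ Set.Ico (0 : ℝ) T, HasDerivAt A (-4 * (A t / B t) ^ 2) t)
    (hB' : ∀ t ∈ Set.Ico (0 : ℝ) T, HasDerivAt B (-8 + 4 * (A t / B t)) t)
    (hlim : Tendsto (fun t => A t / B t) (nhdsWithin T (Set.Iio T)) (nhds 1))
    (h0 : (1 / 2 ≤ A 0 / B 0 ∧ A 0 / B 0 < 1) ∨ 1 < A 0 / B 0) :
    StrictAntiOn (fun t => (A t / B t) * |1 - A t / B t|) (Set.Ico 0 T) ∧
    Tendsto (fun t => (A t / B t) * |1 - A t / B t|)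
      (nhdsWithin T (Set.Iio T)) (nhds 0) :=
  su2_L1_norm_monotone_general T A B hA hB hA' hB' hlim h0
end

section
/- Let A, B, C : [0,∞) → ℝ be differentiable with A(t), B(t), C(t) > 0, satisfying A' = 4(C² − A²)/(BC), B' = 4(A + C)²/(AC), and C' = 4(A² − C²)/(AB). Then ((A + C)/B)'(t) = −8·(A³ + A²C + AC² + C³)/(A·B²·C) < 0 for all t; in particular (A + C)/B is strictly decreasing on [0,∞), and moreover (A(t) + C(t))/B(t) → 0 as t → ∞. -/
/-!
The sum `A + C` has derivative `-4 (C - A)² (A + C) / (ABC) ≤ 0`, so it is bounded by its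
initial value, while `B' = 4 (A + C)² / (AC) ≥ 16` by AM-GM, so `B ≥ B 0 + 16 t → ∞`.
Hence `(A + C) / B ≤ (A 0 + C 0) / B → 0`.
-/

open Filter Set

theorem strictAntiOn_Ici_of_hasDerivAt_neg {f f' : ℝ → ℝ} {a : ℝ}
    (hf : ∀ t, a ≤ t → HasDerivAt f (f' t) t) (hf' : ∀ t, a ≤ t → f' t < 0) :
    StrictAntiOn f (Ici a) :=
  strictAntiOn_of_hasDerivWithinAt_neg (convex_Ici a)
    (fun t ht ↦ (hf t ht).continuousAt.continuousWithinAt)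
    (fun t ht ↦ (hf t (interior_subset ht)).hasDerivWithinAt)
    (fun t ht ↦ hf' t (interior_subset ht))

theorem antitoneOn_Ici_of_hasDerivAt_nonpos {f f' : ℝ → ℝ} {a : ℝ}
    (hf : ∀ t, a ≤ t → HasDerivAt f (f' t) t) (hf' : ∀ t, a ≤ t → f' t ≤ 0) :
    AntitoneOn f (Ici a) :=
  antitoneOn_of_hasDerivWithinAt_nonpos (convex_Ici a)
    (fun t ht ↦ (hf t ht).continuousAt.continuousWithinAt)
    (fun t ht ↦ (hf t (interior_subset ht)).hasDerivWithinAt)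
    (fun t ht ↦ hf' t (interior_subset ht))

theorem tendsto_atTop_of_hasDerivAt_ge {f f' : ℝ → ℝ} {a m : ℝ} (hm : 0 < m)
    (hf : ∀ t, a ≤ t → HasDerivAt f (f' t) t) (hf' : ∀ t, a ≤ t → m ≤ f' t) :
    Tendsto f atTop atTop := by
  have hanti : AntitoneOn (fun t ↦ m * t - f t) (Ici a) :=
    antitoneOn_Ici_of_hasDerivAt_nonpos
      (fun t ht ↦ ((hasDerivAt_id t).const_mul m).sub (hf t ht))
      (fun t ht ↦ by linarith [hf' t ht])
  have hlinear : Tendsto (fun t ↦ m * t + (f a - m * a)) atTop atTop :=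
    tendsto_atTop_add_const_right _ _ (tendsto_id.const_mul_atTop hm)
  refine tendsto_atTop_mono' _ ?_ hlinear
  filter_upwards [eventually_ge_atTop a] with t ht
  linarith [hanti self_mem_Ici (mem_Ici.mpr ht) ht]

namespace IsomMinkowski

variable {A B C : ℝ → ℝ} {t : ℝ}

theorem hasDerivAt_add (hA : A t ≠ 0) (hB : B t ≠ 0) (hC : C t ≠ 0)
    (hA' : HasDerivAt A (4 * ((C t) ^ 2 - (A t) ^ 2) / (B t * C t)) t)
    (hC' : HasDerivAt C (4 * ((A t) ^ 2 - (C t) ^ 2) / (A t * B t)) t) :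
    HasDerivAt (fun s ↦ A s + C s)
      (-(4 * (C t - A t) ^ 2 * (A t + C t) / (A t * B t * C t))) t := by
  refine (hA'.add hC').congr_deriv ?_
  field_simp
  ring

theorem hasDerivAt_ratio (hA : A t ≠ 0) (hB : B t ≠ 0) (hC : C t ≠ 0)
    (hA' : HasDerivAt A (4 * ((C t) ^ 2 - (A t) ^ 2) / (B t * C t)) t)
    (hB' : HasDerivAt B (4 * (A t + C t) ^ 2 / (A t * C t)) t)
    (hC' : HasDerivAt C (4 * ((A t) ^ 2 - (C t) ^ 2) / (A t * B t)) t) :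
    HasDerivAt (fun s ↦ (A s + C s) / B s)
      (-8 * ((A t) ^ 3 + (A t) ^ 2 * C t + A t * (C t) ^ 2 + (C t) ^ 3)
        / (A t * (B t) ^ 2 * C t)) t := by
  refine ((hA'.add hC').div hB' hB).congr_deriv ?_
  simp only [Pi.add_apply]
  field_simp
  ring

theorem neg_eight_mul_sum_cubes_div_neg {a b c : ℝ} (ha : 0 < a) (hb : 0 < b) (hc : 0 < c) :
    -8 * (a ^ 3 + a ^ 2 * c + a * c ^ 2 + c ^ 3) / (a * b ^ 2 * c) < 0 :=
  div_neg_of_neg_of_pos (mul_neg_of_neg_of_pos (by norm_num) (by positivity)) (by positivity)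

theorem sixteen_le_four_mul_add_sq_div_mul {a c : ℝ} (ha : 0 < a) (hc : 0 < c) :
    16 ≤ 4 * (a + c) ^ 2 / (a * c) := by
  rw [le_div_iff₀ (by positivity)]
  nlinarith [sq_nonneg (a - c)]

end IsomMinkowski

open IsomMinkowski

/-- Ricci flow ODE on the Lie group `Isom(ℝ¹₁)`: the quantity `(A + C)/B` satisfies
`((A+C)/B)' = -8(A³ + A²C + AC² + C³)/(AB²C) < 0`, is strictly decreasing on `[0,∞)`,
and tends to `0` as `t → ∞`. -/
theorem isomMinkowski_ratio_decreasing (A B C : ℝ → ℝ)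
    (hA : ∀ t : ℝ, 0 ≤ t → 0 < A t)
    (hB : ∀ t : ℝ, 0 ≤ t → 0 < B t)
    (hC : ∀ t : ℝ, 0 ≤ t → 0 < C t)
    (hA' : ∀ t : ℝ, 0 ≤ t →
      HasDerivAt A (4 * ((C t) ^ 2 - (A t) ^ 2) / (B t * C t)) t)
    (hB' : ∀ t : ℝ, 0 ≤ t →
      HasDerivAt B (4 * (A t + C t) ^ 2 / (A t * C t)) t)
    (hC' : ∀ t : ℝ, 0 ≤ t →
      HasDerivAt C (4 * ((A t) ^ 2 - (C t) ^ 2) / (A t * B t)) t) :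
    (∀ t : ℝ, 0 ≤ t →
      HasDerivAt (fun s => (A s + C s) / B s)
        (-8 * ((A t) ^ 3 + (A t) ^ 2 * C t + A t * (C t) ^ 2 + (C t) ^ 3)
          / (A t * (B t) ^ 2 * C t)) t) ∧
    (∀ t : ℝ, 0 ≤ t →
      -8 * ((A t) ^ 3 + (A t) ^ 2 * C t + A t * (C t) ^ 2 + (C t) ^ 3)
        / (A t * (B t) ^ 2 * C t) < 0) ∧
    StrictAntiOn (fun t => (A t + C t) / B t) (Set.Ici 0) ∧
    Tendsto (fun t => (A t + C t) / B t) atTop (nhds 0) := by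
  have hderiv := fun t ht ↦ hasDerivAt_ratio (hA t ht).ne' (hB t ht).ne'
    (hC t ht).ne' (hA' t ht) (hB' t ht) (hC' t ht)
  have hneg := fun t ht ↦ neg_eight_mul_sum_cubes_div_neg (hA t ht) (hB t ht) (hC t ht)
  refine ⟨hderiv, hneg, strictAntiOn_Ici_of_hasDerivAt_neg hderiv hneg, ?_⟩
  have hsum_anti : AntitoneOn (fun s ↦ A s + C s) (Ici 0) :=
    antitoneOn_Ici_of_hasDerivAt_nonpos
      (fun t ht ↦ hasDerivAt_add (hA t ht).ne' (hB t ht).ne' (hC t ht).ne'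
        (hA' t ht) (hC' t ht))
      (fun t ht ↦ by
        have := hA t ht; have := hB t ht; have := hC t ht
        exact neg_nonpos.mpr (by positivity))
  have hB_top : Tendsto B atTop atTop :=
    tendsto_atTop_of_hasDerivAt_ge (by norm_num) hB'
      (fun t ht ↦ sixteen_le_four_mul_add_sq_div_mul (hA t ht) (hC t ht))
  have hbound : Tendsto (fun t ↦ (A 0 + C 0) / B t) atTop (nhds 0) :=
    tendsto_const_nhds.div_atTop hB_top
  refine squeeze_zero' ?_ ?_ hbound
  · filter_upwards [eventually_ge_atTop 0] with t ht
    exact (div_pos (add_pos (hA t ht) (hC t ht)) (hB t ht)).le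
  · filter_upwards [eventually_ge_atTop 0] with t ht
    exact div_le_div_of_nonneg_right (hsum_anti self_mem_Ici (mem_Ici.mpr ht) ht) (hB t ht).le
end
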